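/- Let P : ℝ^{1+n} → M_N(ℂ) be smooth with values in G_{j,N}. If P satisfies the submodel equations [P, □₂P] = 0 and [P,∂_μP] ⊗ ∂^μP + ∂^μP ⊗ [P,∂_μP] = 0 (sum over μ with Minkowski signs), then Q := P ⊗ P : ℝ^{1+n} → M_{N²}(ℂ) takes values in G_{j²,N²} and satisfies [Q, □₂Q] = 0. -/

import Mathlib

open Matrix Kronecker

attribute [local instance] Matrix.normedAddCommGroup Matrix.normedSpace

/-- Partial derivative in the μ-th coordinate direction (for maps into any normed space). -/
noncomputable def pd {n : ℕ} {E : Type*} [NormedAddCommGroup E] [NormedSpace ℝ E]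
    (μ : Fin (n+1)) (u : (Fin (n+1) → ℝ) → E) : (Fin (n+1) → ℝ) → E :=
  fun x => fderiv ℝ u x (Pi.single μ 1)

/-- The d'Alembertian □₂ = ∂₀² − Σⱼ ∂ⱼ². -/
noncomputable def box2 {n : ℕ} {E : Type*} [NormedAddCommGroup E] [NormedSpace ℝ E]
    (u : (Fin (n+1) → ℝ) → E) : (Fin (n+1) → ℝ) → E :=
  fun x => pd 0 (pd 0 u) x - ∑ j : Fin n, pd j.succ (pd j.succ u) x

section Aux

set_option linter.unusedSectionVars false

variable {d : ℕ} {E F G : Type*} [NormedAddCommGroup E] [NormedSpace ℝ E] [FiniteDimensional ℝ E]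
  [NormedAddCommGroup F] [NormedSpace ℝ F] [FiniteDimensional ℝ F]
  [NormedAddCommGroup G] [NormedSpace ℝ G]

/-- Upgrade a bilinear map between finite-dimensional spaces to a continuous bilinear map. -/
noncomputable def bclm (b : E →ₗ[ℝ] F →ₗ[ℝ] G) : E →L[ℝ] F →L[ℝ] G :=
  LinearMap.toContinuousLinearMap
    { toFun := fun e => LinearMap.toContinuousLinearMap (b e)
      map_add' := by intros; ext; simp
      map_smul' := by intros; ext; simp }

lemma hasFDerivAt_bilin (b : E →ₗ[ℝ] F →ₗ[ℝ] G) {f : (Fin (d+1) → ℝ) → E}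
    {g : (Fin (d+1) → ℝ) → F} {x} (hf : DifferentiableAt ℝ f x)
    (hg : DifferentiableAt ℝ g x) :
    HasFDerivAt (fun y => b (f y) (g y))
      (((bclm b).isBoundedBilinearMap.deriv (f x, g x)).comp
        ((fderiv ℝ f x).prod (fderiv ℝ g x))) x := by
  exact ((bclm b).isBoundedBilinearMap.hasFDerivAt (f x, g x)).comp x
    (hf.hasFDerivAt.prodMk hg.hasFDerivAt)

lemma diff_bilin (b : E →ₗ[ℝ] F →ₗ[ℝ] G) {f : (Fin (d+1) → ℝ) → E}
    {g : (Fin (d+1) → ℝ) → F} (hf : Differentiable ℝ f) (hg : Differentiable ℝ g) :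
    Differentiable ℝ (fun y => b (f y) (g y)) :=
  fun x => (hasFDerivAt_bilin b (hf x) (hg x)).differentiableAt

lemma pd_bilin (b : E →ₗ[ℝ] F →ₗ[ℝ] G) {f : (Fin (d+1) → ℝ) → E}
    {g : (Fin (d+1) → ℝ) → F} {x} (hf : DifferentiableAt ℝ f x)
    (hg : DifferentiableAt ℝ g x) (μ : Fin (d+1)) :
    pd μ (fun y => b (f y) (g y)) x = b (pd μ f x) (g x) + b (f x) (pd μ g x) := by
  unfold pd
  rw [(hasFDerivAt_bilin b hf hg).fderiv]
  have : ∀ e fv, bclm b e fv = b e fv := fun _ _ => rfl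
  simp [IsBoundedBilinearMap.deriv_apply, this, add_comm]

lemma pd_add {u v : (Fin (d+1) → ℝ) → E} {x} (hu : DifferentiableAt ℝ u x)
    (hv : DifferentiableAt ℝ v x) (μ : Fin (d+1)) :
    pd μ (fun y => u y + v y) x = pd μ u x + pd μ v x := by
  unfold pd; rw [fderiv_fun_add hu hv]; simp

lemma pd_smooth {u : (Fin (d+1) → ℝ) → E} (hu : ContDiff ℝ (⊤ : ℕ∞) u) (μ : Fin (d+1)) :
    ContDiff ℝ (⊤ : ℕ∞) (pd μ u) :=
  (hu.fderiv_right (by simp)).clm_apply contDiff_const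

end Aux

/-- Matrix multiplication as an ℝ-bilinear map. -/
noncomputable def mulL (N : ℕ) :
    Matrix (Fin N) (Fin N) ℂ →ₗ[ℝ] Matrix (Fin N) (Fin N) ℂ →ₗ[ℝ] Matrix (Fin N) (Fin N) ℂ :=
  LinearMap.mul ℝ _

/-- The Kronecker product as an ℝ-bilinear map. -/
noncomputable def kronL (N : ℕ) :
    Matrix (Fin N) (Fin N) ℂ →ₗ[ℝ] Matrix (Fin N) (Fin N) ℂ →ₗ[ℝ]
      Matrix (Fin N × Fin N) (Fin N × Fin N) ℂ :=
  LinearMap.mk₂ ℝ (fun A B => A ⊗ₖ B) (fun A A' B => Matrix.add_kronecker A A' B)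
    (fun r A B => Matrix.smul_kronecker r A B) (fun A B B' => Matrix.kronecker_add A B B')
    (fun r A B => Matrix.kronecker_smul r A B)

section MatAux

variable {d N : ℕ}

lemma diff_kron {f g : (Fin (d+1) → ℝ) → Matrix (Fin N) (Fin N) ℂ}
    (hf : Differentiable ℝ f) (hg : Differentiable ℝ g) :
    Differentiable ℝ (fun y => f y ⊗ₖ g y) :=
  diff_bilin (kronL N) hf hg

lemma pd_kron {f g : (Fin (d+1) → ℝ) → Matrix (Fin N) (Fin N) ℂ} {x}
    (hf : DifferentiableAt ℝ f x) (hg : DifferentiableAt ℝ g x) (μ : Fin (d+1)) :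
    pd μ (fun y => f y ⊗ₖ g y) x = pd μ f x ⊗ₖ g x + f x ⊗ₖ pd μ g x :=
  pd_bilin (kronL N) hf hg μ

lemma pd_mul {f g : (Fin (d+1) → ℝ) → Matrix (Fin N) (Fin N) ℂ} {x}
    (hf : DifferentiableAt ℝ f x) (hg : DifferentiableAt ℝ g x) (μ : Fin (d+1)) :
    pd μ (fun y => f y * g y) x = pd μ f x * g x + f x * pd μ g x :=
  pd_bilin (mulL N) hf hg μ

end MatAux

lemma sub_kron {l m n p : Type*} (A B : Matrix l m ℂ) (C : Matrix n p ℂ) :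
    (A - B) ⊗ₖ C = A ⊗ₖ C - B ⊗ₖ C := by
  ext ⟨i,j⟩ ⟨k,r⟩; simp [Matrix.kroneckerMap_apply, sub_mul]

lemma kron_sub {l m n p : Type*} (A : Matrix l m ℂ) (B C : Matrix n p ℂ) :
    A ⊗ₖ (B - C) = A ⊗ₖ B - A ⊗ₖ C := by
  ext ⟨i,j⟩ ⟨k,r⟩; simp [Matrix.kroneckerMap_apply, mul_sub]

lemma sum_kron {l m n p ι : Type*} (s : Finset ι) (A : ι → Matrix l m ℂ) (C : Matrix n p ℂ) :
    (∑ i ∈ s, A i) ⊗ₖ C = ∑ i ∈ s, A i ⊗ₖ C := by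
  ext ⟨i,j⟩ ⟨k,r⟩
  simp [Matrix.kroneckerMap_apply, Matrix.sum_apply, Finset.sum_mul]

lemma kron_sum {l m n p ι : Type*} (s : Finset ι) (A : Matrix l m ℂ) (C : ι → Matrix n p ℂ) :
    A ⊗ₖ (∑ i ∈ s, C i) = ∑ i ∈ s, A ⊗ₖ C i := by
  ext ⟨i,j⟩ ⟨k,r⟩
  simp [Matrix.kroneckerMap_apply, Matrix.sum_apply, Finset.mul_sum]

lemma kron_conjT {N : ℕ} (A B : Matrix (Fin N) (Fin N) ℂ) : (A ⊗ₖ B)ᴴ = Aᴴ ⊗ₖ Bᴴ := by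
  ext ⟨i,j⟩ ⟨k,r⟩; simp [Matrix.conjTranspose_apply, Matrix.kroneckerMap_apply, mul_comm]

lemma main_alg {N m : ℕ} (p B A0 : Matrix (Fin N) (Fin N) ℂ) (A : Fin m → Matrix (Fin N) (Fin N) ℂ)
    (hp : p*p = p) (hB : p*B = B*p)
    (h0 : p*A0*p = 0) (hl : ∀ l, p*(A l)*p = 0)
    (hS : ((p*A0 - A0*p) ⊗ₖ A0 + A0 ⊗ₖ (p*A0 - A0*p))
        - ∑ l, ((p*(A l) - (A l)*p) ⊗ₖ (A l) + (A l) ⊗ₖ (p*(A l) - (A l)*p)) = 0) :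
    (p⊗ₖp) * ((B⊗ₖp + p⊗ₖB) + ((A0⊗ₖA0 + A0⊗ₖA0) - ∑ l, ((A l)⊗ₖ(A l) + (A l)⊗ₖ(A l))))
    - ((B⊗ₖp + p⊗ₖB) + ((A0⊗ₖA0 + A0⊗ₖA0) - ∑ l, ((A l)⊗ₖ(A l) + (A l)⊗ₖ(A l)))) * (p⊗ₖp) = 0 := by
  set S := ((p*A0 - A0*p) ⊗ₖ A0 + A0 ⊗ₖ (p*A0 - A0*p))
        - ∑ l, ((p*(A l) - (A l)*p) ⊗ₖ (A l) + (A l) ⊗ₖ (p*(A l) - (A l)*p)) with hSdef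
  have hzero : (p⊗ₖp) * S + S * (p⊗ₖp) = 0 := by rw [hS]; simp
  have e1 : ∀ C : Matrix (Fin N) (Fin N) ℂ, p*(p*C) = p*C := fun C => by rw [← mul_assoc, hp]
  have e30 : p*(A0*p) = 0 := by rw [← mul_assoc]; exact h0
  have e3 : ∀ l, p*(A l*p) = 0 := fun l => by rw [← mul_assoc]; exact hl l
  calc (p⊗ₖp) * ((B⊗ₖp + p⊗ₖB) + ((A0⊗ₖA0 + A0⊗ₖA0) - ∑ l, ((A l)⊗ₖ(A l) + (A l)⊗ₖ(A l))))
    - ((B⊗ₖp + p⊗ₖB) + ((A0⊗ₖA0 + A0⊗ₖA0) - ∑ l, ((A l)⊗ₖ(A l) + (A l)⊗ₖ(A l)))) * (p⊗ₖp)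
      = (p⊗ₖp) * S + S * (p⊗ₖp) := by
        rw [hSdef]
        simp only [← Matrix.mul_kronecker_mul, Matrix.add_kronecker, Matrix.kronecker_add,
          sub_kron, kron_sub, Matrix.zero_kronecker, Matrix.kronecker_zero,
          mul_add, add_mul, mul_sub, sub_mul, Finset.mul_sum, Finset.sum_mul,
          Finset.sum_sub_distrib, Finset.sum_add_distrib, mul_assoc, hp, hB, e1, e30, e3,
          mul_zero, zero_mul, sub_zero, zero_sub]
        abel
    _ = 0 := hzero

theorem stmt19 {n N j : ℕ} (P : (Fin (n+1) → ℝ) → Matrix (Fin N) (Fin N) ℂ)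
    (hP : ContDiff ℝ (⊤ : ℕ∞) P)
    (hproj : ∀ x, P x * P x = P x)
    (hherm : ∀ x, (P x)ᴴ = P x)
    (htr : ∀ x, (P x).trace = (j : ℂ))
    (heom : ∀ x, P x * box2 P x - box2 P x * P x = 0)
    (hsub : ∀ x,
      ((P x * pd 0 P x - pd 0 P x * P x) ⊗ₖ pd 0 P x
          + pd 0 P x ⊗ₖ (P x * pd 0 P x - pd 0 P x * P x))
        - ∑ l : Fin n,
            ((P x * pd l.succ P x - pd l.succ P x * P x) ⊗ₖ pd l.succ P x
              + pd l.succ P x ⊗ₖ (P x * pd l.succ P x - pd l.succ P x * P x)) = 0)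
    (Q : (Fin (n+1) → ℝ) → Matrix (Fin N × Fin N) (Fin N × Fin N) ℂ)
    (hQ : Q = fun x => P x ⊗ₖ P x) :
    (∀ x, Q x * Q x = Q x ∧ (Q x)ᴴ = Q x ∧ (Q x).trace = ((j : ℂ))^2) ∧
      (∀ x, Q x * box2 Q x - box2 Q x * Q x = 0) := by
  subst hQ
  have dP : Differentiable ℝ P := hP.differentiable (by simp)
  have dpd : ∀ μ : Fin (n+1), Differentiable ℝ (pd μ P) :=
    fun μ => (pd_smooth hP μ).differentiable (by simp)
  constructor
  · intro x
    refine ⟨?_, ?_, ?_⟩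
    · rw [← Matrix.mul_kronecker_mul, hproj x]
    · rw [kron_conjT, hherm x]
    · rw [Matrix.trace_kronecker, htr x, sq]
  · intro x
    -- first derivative of P * P = P
    have hAP : ∀ μ : Fin (n+1), ∀ y, pd μ P y = pd μ P y * P y + P y * pd μ P y := by
      intro μ y
      have hPP : (fun z => P z * P z) = P := funext hproj
      conv_lhs => rw [← hPP]
      exact pd_mul (dP y) (dP y) μ
    have hPAP : ∀ μ : Fin (n+1), P x * pd μ P x * P x = 0 := by
      intro μ
      have h2 := congrArg (fun C => P x * C * P x) (hAP μ x)
      have e1 : ∀ C : Matrix (Fin N) (Fin N) ℂ, P x * (P x * C) = P x * C :=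
        fun C => by rw [← mul_assoc, hproj x]
      simp only [mul_add, add_mul, mul_assoc, e1, hproj x] at h2
      have h3 : P x * (pd μ P x * P x) = 0 := by
        have := left_eq_add.mp h2
        exact this
      rw [mul_assoc]; exact h3
    -- first derivative of Q
    have h1 : ∀ μ : Fin (n+1), ∀ y,
        pd μ (fun z => P z ⊗ₖ P z) y = pd μ P y ⊗ₖ P y + P y ⊗ₖ pd μ P y :=
      fun μ y => pd_kron (dP y) (dP y) μ
    have hQd : ∀ μ : Fin (n+1), pd μ (fun z => P z ⊗ₖ P z)
        = fun y => pd μ P y ⊗ₖ P y + P y ⊗ₖ pd μ P y :=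
      fun μ => funext (h1 μ)
    -- second derivative of Q
    have h2 : ∀ μ : Fin (n+1), pd μ (pd μ (fun z => P z ⊗ₖ P z)) x
        = (pd μ (pd μ P) x ⊗ₖ P x + pd μ P x ⊗ₖ pd μ P x)
          + (pd μ P x ⊗ₖ pd μ P x + P x ⊗ₖ pd μ (pd μ P) x) := by
      intro μ
      rw [hQd μ,
        pd_add (diff_kron (dpd μ) dP x) (diff_kron dP (dpd μ) x) μ,
        pd_kron (dpd μ x) (dP x) μ, pd_kron (dP x) (dpd μ x) μ]
    -- the box of Q
    have hbox : box2 (fun z => P z ⊗ₖ P z) x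
        = (box2 P x ⊗ₖ P x + P x ⊗ₖ box2 P x)
          + ((pd 0 P x ⊗ₖ pd 0 P x + pd 0 P x ⊗ₖ pd 0 P x)
            - ∑ l : Fin n, (pd l.succ P x ⊗ₖ pd l.succ P x + pd l.succ P x ⊗ₖ pd l.succ P x)) := by
      simp only [box2, h2, sub_kron, kron_sub, sum_kron, kron_sum, Finset.sum_add_distrib,
        Finset.sum_sub_distrib]
      abel
    rw [hbox]
    have goal := main_alg (P x) (box2 P x) (pd 0 P x) (fun l => pd l.succ P x)
      (hproj x) (sub_eq_zero.mp (heom x)) (hPAP 0) (fun l => hPAP l.succ) (hsub x)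
    calc (P x ⊗ₖ P x) * ((box2 P x ⊗ₖ P x + P x ⊗ₖ box2 P x)
          + ((pd 0 P x ⊗ₖ pd 0 P x + pd 0 P x ⊗ₖ pd 0 P x)
            - ∑ l : Fin n, (pd l.succ P x ⊗ₖ pd l.succ P x + pd l.succ P x ⊗ₖ pd l.succ P x)))
        - ((box2 P x ⊗ₖ P x + P x ⊗ₖ box2 P x)
          + ((pd 0 P x ⊗ₖ pd 0 P x + pd 0 P x ⊗ₖ pd 0 P x)
            - ∑ l : Fin n, (pd l.succ P x ⊗ₖ pd l.succ P x + pd l.succ P x ⊗ₖ pd l.succ P x)))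
          * (P x ⊗ₖ P x) = 0 := goal
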